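/- (Proposition 3.4) For every integer n ≥ 9, p(n) < p(n+1) and q(n) < q(n+1); that is, both sequences (p(n)) and (q(n)) are increasing from n = 9 onward. -/

import Mathlib

/-- `pq n = (p n, q n)` where `p n` (resp. `q n`) is the probability that the
exploitative player X, always guessing `2` or `n-1`, wins the misère search game
`MS(P_n)` against the uniformly random player R when playing first (resp. second):
`p 0 = p 1 = 0`, `q 0 = 0`,
`q n = (1/n) * ∑_{i=1}^{n} ((i-1)·p(i-1) + (n-i)·p(n-i) + 1)/n` for `n ≥ 1`, and
`p n = 1/n + ((n-2)/n) * q (n-2)` for `n ≥ 2`. -/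
noncomputable def pq : ℕ → ℝ × ℝ
  | 0 => (0, 0)
  | 1 =>
    (0,
      (1 / ((1 : ℕ) : ℝ)) * ∑ i ∈ (Finset.Icc 1 1).attach,
        (((i.1 - 1 : ℕ) : ℝ) * (pq (i.1 - 1)).1 +
          ((1 - i.1 : ℕ) : ℝ) * (pq (1 - i.1)).1 + 1) / ((1 : ℕ) : ℝ))
  | n + 2 =>
    (1 / ((n : ℝ) + 2) + ((n : ℝ) / ((n : ℝ) + 2)) * (pq n).2,
      (1 / ((n : ℝ) + 2)) * ∑ i ∈ (Finset.Icc 1 (n + 2)).attach,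
        (((i.1 - 1 : ℕ) : ℝ) * (pq (i.1 - 1)).1 +
          ((n + 2 - i.1 : ℕ) : ℝ) * (pq (n + 2 - i.1)).1 + 1) / ((n : ℝ) + 2))
  decreasing_by
  · have hm := i.2; simp only [Finset.mem_Icc] at hm; omega
  · have hm := i.2; simp only [Finset.mem_Icc] at hm; omega
  · omega
  · have hm := i.2; simp only [Finset.mem_Icc] at hm; omega
  · have hm := i.2; simp only [Finset.mem_Icc] at hm; omega

/-- X's winning probability in `MS(P_n)` playing first. -/
noncomputable def p (n : ℕ) : ℝ := (pq n).1

/-- X's winning probability in `MS(P_n)` playing second. -/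
noncomputable def q (n : ℕ) : ℝ := (pq n).2

/-- `s n = ∑_{i=1}^{n} i * p i`. -/
noncomputable def s (n : ℕ) : ℝ := ∑ i ∈ Finset.Icc 1 n, (i : ℝ) * p i

lemma p_zero : p 0 = 0 := by simp [p, pq]
lemma p_one : p 1 = 0 := by simp [p, pq]
lemma q_zero : q 0 = 0 := by simp [q, pq]
lemma q_one : q 1 = 1 := by
  show (pq 1).2 = 1
  rw [pq]
  rw [Finset.sum_attach (Finset.Icc 1 1)
    (fun i => (((i - 1 : ℕ) : ℝ) * (pq (i - 1)).1 + ((1 - i : ℕ) : ℝ) * (pq (1 - i)).1 + 1) / ((1 : ℕ) : ℝ))]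
  norm_num

lemma p_eq (n : ℕ) : ((n:ℝ)+2) * p (n+2) = 1 + (n:ℝ) * q n := by
  show ((n:ℝ)+2) * (pq (n+2)).1 = _
  rw [pq]
  show ((n:ℝ)+2) * (1 / ((n : ℝ) + 2) + ((n : ℝ) / ((n : ℝ) + 2)) * q n) = _
  have h : ((n:ℝ)+2) ≠ 0 := by positivity
  field_simp

lemma s_zero : s 0 = 0 := by simp [s]

lemma s_succ (m : ℕ) : s (m+1) = s m + ((m:ℝ)+1) * p (m+1) := by
  rw [s, s, Finset.sum_Icc_succ_top (by omega : 1 ≤ m+1)]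
  push_cast
  ring

lemma s_range (k : ℕ) : s k = ∑ j ∈ Finset.range (k+1), (j:ℝ) * p j := by
  induction k with
  | zero => simp [s]
  | succ k ih => rw [s_succ, Finset.sum_range_succ, ← ih]; push_cast; ring
lemma sum_key (k : ℕ) :
    ∑ i ∈ Finset.Icc 1 (k+2), ((((i-1:ℕ)):ℝ) * p (i-1) + ((k+2-i:ℕ):ℝ) * p (k+2-i) + 1)
      = 2 * s (k+1) + ((k:ℝ)+2) := by
  rw [← Finset.Ico_add_one_right_eq_Icc, Finset.sum_Ico_eq_sum_range]
  have e : k+2+1-1 = k+2 := by omega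
  rw [e]
  have congr1 : ∀ i ∈ Finset.range (k+2),
      (((1+i-1:ℕ)):ℝ) * p (1+i-1) + ((k+2-(1+i):ℕ):ℝ) * p (k+2-(1+i)) + 1
        = ((i:ℕ):ℝ) * p i + ((k+1-i:ℕ):ℝ) * p (k+1-i) + 1 := by
    intro i hi
    have e1 : 1+i-1 = i := by omega
    have e2 : k+2-(1+i) = k+1-i := by omega
    rw [e1, e2]
  rw [Finset.sum_congr rfl congr1]
  have hrefl : ∑ i ∈ Finset.range (k+2), ((k+1-i:ℕ):ℝ) * p (k+1-i)
      = ∑ i ∈ Finset.range (k+2), ((i:ℕ):ℝ) * p i := by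
    have h := Finset.sum_range_reflect (fun j => ((j:ℕ):ℝ) * p j) (k+2)
    simpa using h
  rw [Finset.sum_add_distrib, Finset.sum_add_distrib, hrefl, Finset.sum_const,
    Finset.card_range, ← s_range]
  push_cast
  ring

lemma q_eq (m : ℕ) : ((m:ℝ)+1)^2 * q (m+1) = ((m:ℝ)+1) + 2 * s m := by
  cases m with
  | zero => rw [q_one, s_zero]; norm_num
  | succ k =>
    have h : q (k+2) = (1/((k:ℝ)+2)) * ∑ i ∈ Finset.Icc 1 (k+2),
        ((((i-1:ℕ)):ℝ) * p (i-1) + ((k+2-i:ℕ):ℝ) * p (k+2-i) + 1)/((k:ℝ)+2) := by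
      show (pq (k+2)).2 = _
      rw [pq]
      rw [Finset.sum_attach (Finset.Icc 1 (k+2))
        (fun i => (((i - 1 : ℕ) : ℝ) * (pq (i - 1)).1 + ((k+2 - i : ℕ) : ℝ) * (pq (k+2 - i)).1 + 1) / ((k:ℝ)+2))]
      rfl
    rw [← Finset.sum_div, sum_key] at h
    have hk : ((k:ℝ)+2) ≠ 0 := by positivity
    have : q (k+1+1) = q (k+2) := by norm_num
    rw [this, h]
    field_simp
    push_cast
    ring
lemma q_succ (m : ℕ) : ((m:ℝ)+2)^2 * q (m+2) = 1 + ((m:ℝ)+1)^2 * q (m+1) + 2*((m:ℝ)+1) * p (m+1) := by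
  have h1 := q_eq (m+1)
  have h2 := q_eq m
  have h3 := s_succ m
  rw [show m+1+1 = m+2 from by omega] at h1
  push_cast at h1
  linear_combination h1 + 2*h3 - h2

lemma Rq (m : ℕ) : ((m:ℝ)+4)^2 * q (m+4) = 6 + ((m:ℝ)+2)^2 * q (m+2) + 2*(m:ℝ)*q m + 2*((m:ℝ)+1)*q (m+1) := by
  have a1 := q_succ (m+2)
  have a2 := q_succ (m+1)
  have b1 := p_eq (m+1)
  have b2 := p_eq m
  rw [show m+2+2 = m+4 from by omega, show m+2+1 = m+3 from by omega] at a1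
  rw [show m+1+2 = m+3 from by omega, show m+1+1 = m+2 from by omega] at a2
  rw [show m+1+2 = m+3 from by omega] at b1
  push_cast at a1 a2 b1
  linear_combination a1 + a2 + 2*b1 + 2*b2

lemma Rp (m : ℕ) : ((m:ℝ)+3)^2 * q (m+3) = 3 + ((m:ℝ)+2)^2 * q (m+2) + 2*(m:ℝ)*q m := by
  have a2 := q_succ (m+1)
  have b2 := p_eq m
  rw [show m+1+2 = m+3 from by omega, show m+1+1 = m+2 from by omega] at a2
  push_cast at a2
  linear_combination a2 + 2*b2

lemma step_a (k : ℕ) (hk : 1 ≤ k)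
    (ha : 100*(k:ℝ)*q k ≤ 60*(k:ℝ) - 1)
    (hb : ((k:ℝ)+2)^2*(q (k+2) - q k) ≤ 1/50) :
    100*((k:ℝ)+2)*q (k+2) ≤ 60*((k:ℝ)+2) - 1 := by
  set x : ℝ := (k:ℝ) with hx
  have hx1 : (1:ℝ) ≤ x := by rw [hx]; exact_mod_cast hk
  have s1 : 100*x*(((x:ℝ)+2)^2*(q (k+2) - q k)) ≤ 100*x*(1/50) :=
    mul_le_mul_of_nonneg_left hb (by positivity)
  have s2 : (x+2)^2*(100*x*q k) ≤ (x+2)^2*(60*x - 1) :=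
    mul_le_mul_of_nonneg_left ha (by positivity)
  have key : (100*(x+2)*q (k+2) - (60*(x+2) - 1)) * (x*(x+2)) ≤ -4 := by nlinarith [s1, s2]
  nlinarith [key, mul_pos (by linarith : (0:ℝ) < x) (by linarith : (0:ℝ) < x+2)]

lemma step_c (m : ℕ)
    (ha : 100*((m:ℝ)+2)*q (m+2) ≤ 60*((m:ℝ)+2) - 1)
    (hb : ((m:ℝ)+2)^2*(q (m+2) - q m) ≤ 1/50) :
    q (m+2) < q (m+3) := by
  set x : ℝ := (m:ℝ) with hxdef
  have hx : (0:ℝ) ≤ x := Nat.cast_nonneg m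
  have s1 : 5*(x+2)*(100*(x+2)*q (m+2)) ≤ 5*(x+2)*(60*(x+2) - 1) :=
    mul_le_mul_of_nonneg_left ha (by positivity)
  have s2 : 200*x*(((x:ℝ)+2)^2*(q (m+2) - q m)) ≤ 200*x*(1/50) :=
    mul_le_mul_of_nonneg_left hb (by positivity)
  have hW' : 0 < (3 + 2*x*q m - (2*x+5)*q (m+2)) * (100*(x+2)^2) := by nlinarith [s1, s2]
  have hW : 0 < 3 + 2*x*q m - (2*x+5)*q (m+2) := by
    nlinarith [hW', sq_nonneg (x+2)]
  have hid : (x+3)^2*(q (m+3) - q (m+2)) = 3 + 2*x*q m - (2*x+5)*q (m+2) := by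
    linear_combination Rp m
  nlinarith [hid, hW, show (0:ℝ) < (x+3)^2 by positivity]

lemma p_step (m : ℕ) (h1 : q m ≤ q (m+1)) (h2 : 1/2 < q m) : p (m+2) < p (m+3) := by
  set x : ℝ := (m:ℝ) with hxdef
  have hx : (0:ℝ) ≤ x := Nat.cast_nonneg m
  have e1 := p_eq m
  have e2 := p_eq (m+1)
  rw [show m+1+2 = m+3 from by omega] at e2
  push_cast at e2
  have key : (x+2)*(x+3)*(p (m+3) - p (m+2))
      = -1 + (x+1)*(x+2)*q (m+1) - x*(x+3)*q m := by
    linear_combination (x+2)*e2 - (x+3)*e1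
  have s1 : (x+1)*(x+2)*q m ≤ (x+1)*(x+2)*q (m+1) :=
    mul_le_mul_of_nonneg_left h1 (by positivity)
  nlinarith [key, s1, h2, mul_pos (show (0:ℝ) < x+2 by linarith) (show (0:ℝ) < x+3 by linarith)]
set_option maxHeartbeats 1000000 in
lemma step_b (m : ℕ) (hm : 1 ≤ m)
    (hb0 : ((m:ℝ)+2)^2*(q (m+2) - q m) ≤ 1/50)
    (hb1 : ((m:ℝ)+3)^2*(q (m+3) - q (m+1)) ≤ 1/50)
    (hb2 : ((m:ℝ)+4)^2*(q (m+4) - q (m+2)) ≤ 1/50)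
    (hc0 : q m < q (m+1)) (hc1 : q (m+1) < q (m+2))
    (hc2 : q (m+2) < q (m+3)) (hc3 : q (m+3) < q (m+4)) :
    ((m:ℝ)+6)^2*(q (m+6) - q (m+4)) ≤ 1/50 := by
  set x : ℝ := (m:ℝ) with hxdef
  have hx : (1:ℝ) ≤ x := by rw [hxdef]; exact_mod_cast hm
  have hR1 := Rq m
  have hR2 := Rq (m+2)
  rw [show m+2+4 = m+6 from by omega, show m+2+2 = m+4 from by omega,
    show m+2+1 = m+3 from by omega] at hR2
  push_cast at hR2
  -- abbreviations
  have h2 : (0:ℝ) < x+2 := by linarith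
  have h3 : (0:ℝ) < x+3 := by linarith
  have h4 : (0:ℝ) < x+4 := by linarith
  have hD : (0:ℝ) < (x+4)^2*(x+3)*(x+2)^2 :=
    mul_pos (mul_pos (pow_pos h4 2) h3) (pow_pos h2 2)
  have hid : ((x+4)^2*(x+3)*(x+2)^2) * ((x+6)^2*(q (m+6) - q (m+4)))
      = ((x^2+4*x-4)*(x+3)*(x+2)^2) * ((x+4)^2*(q (m+4) - q (m+2)))
        + (2*(x+4)^2*(x+2)^2) * ((x+3)^2*(q (m+3) - q (m+1)))
        + (2*x*(x+4)^2*(x+3)) * ((x+2)^2*(q (m+2) - q m))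
        - 4*((x+4)^2*(x+3)*(x+2)^2)*(q (m+2) - q (m+1)) := by
    linear_combination ((x+4)^2*(x+3)*(x+2)^2) * hR2 - ((x+4)^2*(x+3)*(x+2)^2) * hR1
  have t4 : ((x^2+4*x-4)*(x+3)*(x+2)^2) * ((x+4)^2*(q (m+4) - q (m+2)))
      ≤ ((x^2+4*x-4)*(x+3)*(x+2)^2) * (1/50) :=
    mul_le_mul_of_nonneg_left hb2 (by nlinarith)
  have t3 : (2*(x+4)^2*(x+2)^2) * ((x+3)^2*(q (m+3) - q (m+1)))
      ≤ (2*(x+4)^2*(x+2)^2) * (1/50) :=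
    mul_le_mul_of_nonneg_left hb1 (by positivity)
  have t2 : (2*x*(x+4)^2*(x+3)) * ((x+2)^2*(q (m+2) - q m))
      ≤ (2*x*(x+4)^2*(x+3)) * (1/50) :=
    mul_le_mul_of_nonneg_left hb0 (by nlinarith)
  have hdel : 0 ≤ 4*((x+4)^2*(x+3)*(x+2)^2)*(q (m+2) - q (m+1)) := by
    have : (0:ℝ) ≤ q (m+2) - q (m+1) := by linarith
    positivity
  have hP : ((x^2+4*x-4)*(x+3)*(x+2)^2) * (1/50) + (2*(x+4)^2*(x+2)^2) * (1/50)
      + (2*x*(x+4)^2*(x+3)) * (1/50) ≤ ((x+4)^2*(x+3)*(x+2)^2) * (1/50) := by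
    nlinarith [hx]
  have final : ((x+4)^2*(x+3)*(x+2)^2) * ((x+6)^2*(q (m+6) - q (m+4)))
      ≤ ((x+4)^2*(x+3)*(x+2)^2) * (1/50) := by linarith [hid, t4, t3, t2, hdel, hP]
  exact le_of_mul_le_mul_left final hD
lemma qv1 : q 1 = 1 := q_one

lemma pv0 : p 0 = 0 := p_zero

lemma pv1 : p 1 = 0 := p_one

lemma pv2 : p 2 = ((1 : ℝ)/2) := by
  have h := p_eq 0
  norm_num [q_zero] at h ⊢
  linarith

lemma qv2 : q 2 = ((1 : ℝ)/2) := by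
  have h := q_succ 0
  norm_num [qv1, pv1] at h ⊢
  linarith

lemma pv3 : p 3 = ((2 : ℝ)/3) := by
  have h := p_eq 1
  norm_num [qv1] at h ⊢
  linarith

lemma qv3 : q 3 = ((5 : ℝ)/9) := by
  have h := q_succ 1
  norm_num [qv2, pv2] at h ⊢
  linarith

lemma pv4 : p 4 = ((1 : ℝ)/2) := by
  have h := p_eq 2
  norm_num [qv2] at h ⊢
  linarith

lemma qv4 : q 4 = ((5 : ℝ)/8) := by
  have h := q_succ 2
  norm_num [qv3, pv3] at h ⊢
  linarith

lemma pv5 : p 5 = ((8 : ℝ)/15) := by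
  have h := p_eq 3
  norm_num [qv3] at h ⊢
  linarith

lemma qv5 : q 5 = ((3 : ℝ)/5) := by
  have h := q_succ 3
  norm_num [qv4, pv4] at h ⊢
  linarith

lemma pv6 : p 6 = ((7 : ℝ)/12) := by
  have h := p_eq 4
  norm_num [qv4] at h ⊢
  linarith

lemma qv6 : q 6 = ((16 : ℝ)/27) := by
  have h := q_succ 4
  norm_num [qv5, pv5] at h ⊢
  linarith

lemma pv7 : p 7 = ((4 : ℝ)/7) := by
  have h := p_eq 5
  norm_num [qv5] at h ⊢
  linarith

lemma qv7 : q 7 = ((88 : ℝ)/147) := by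
  have h := q_succ 5
  norm_num [qv6, pv6] at h ⊢
  linarith

lemma pv8 : p 8 = ((41 : ℝ)/72) := by
  have h := p_eq 6
  norm_num [qv6] at h ⊢
  linarith

lemma qv8 : q 8 = ((115 : ℝ)/192) := by
  have h := q_succ 6
  norm_num [qv7, pv7] at h ⊢
  linarith

lemma pv9 : p 9 = ((109 : ℝ)/189) := by
  have h := p_eq 7
  norm_num [qv7] at h ⊢
  linarith

lemma qv9 : q 9 = ((436 : ℝ)/729) := by
  have h := q_succ 7
  norm_num [qv8, pv8] at h ⊢
  linarith

lemma pv10 : p 10 = ((139 : ℝ)/240) := by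
  have h := p_eq 8
  norm_num [qv8] at h ⊢
  linarith

lemma qv10 : q 10 = ((3769 : ℝ)/6300) := by
  have h := q_succ 8
  norm_num [qv9, pv9] at h ⊢
  linarith

lemma pv11 : p 11 = ((47 : ℝ)/81) := by
  have h := p_eq 9
  norm_num [qv9] at h ⊢
  linarith

lemma qv11 : q 11 = ((18247 : ℝ)/30492) := by
  have h := q_succ 9
  norm_num [qv10, pv10] at h ⊢
  linarith

lemma pv12 : p 12 = ((4399 : ℝ)/7560) := by
  have h := p_eq 10
  norm_num [qv10] at h ⊢
  linarith

lemma qv12 : q 12 = ((195443 : ℝ)/326592) := by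
  have h := q_succ 10
  norm_num [qv11, pv11] at h ⊢
  linarith

lemma pv13 : p 13 = ((21019 : ℝ)/36036) := by
  have h := p_eq 11
  norm_num [qv11] at h ⊢
  linarith

lemma qv13 : q 13 = ((1146919 : ℝ)/1916460) := by
  have h := q_succ 11
  norm_num [qv12, pv12] at h ⊢
  linarith

lemma pv14 : p 14 = ((222659 : ℝ)/381024) := by
  have h := p_eq 12
  norm_num [qv12] at h ⊢
  linarith

lemma qv14 : q 14 = ((14632559 : ℝ)/24449040) := by
  have h := q_succ 12
  norm_num [qv13, pv13] at h ⊢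
  linarith

lemma pv15 : p 15 = ((1294339 : ℝ)/2211300) := by
  have h := p_eq 13
  norm_num [qv13] at h ⊢
  linarith

lemma qv15 : q 15 = ((14398577 : ℝ)/24057000) := by
  have h := q_succ 13
  norm_num [qv14, pv14] at h ⊢
  linarith

lemma pv16 : p 16 = ((16378919 : ℝ)/27941760) := by
  have h := p_eq 14
  norm_num [qv14] at h ⊢
  linarith

lemma qv16 : q 16 = ((298170595 : ℝ)/498161664) := by
  have h := q_succ 14
  norm_num [qv15, pv15] at h ⊢
  linarith

lemma pv17 : p 17 = ((16002377 : ℝ)/27264600) := by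
  have h := p_eq 15
  norm_num [qv15] at h ⊢
  linarith

lemma qv17 : q 17 = ((11781634547 : ℝ)/19683223560) := by
  have h := q_succ 15
  norm_num [qv16, pv16] at h ⊢
  linarith

lemma pv18 : p 18 = ((329305699 : ℝ)/560431872) := by
  have h := p_eq 16
  norm_num [qv16] at h ⊢
  linarith

lemma qv18 : q 18 = ((198133167103 : ℝ)/331005074400) := by
  have h := q_succ 16
  norm_num [qv17, pv17] at h ⊢
  linarith

lemma pv19 : p 19 = ((12939471227 : ℝ)/21998896920) := by
  have h := p_eq 17
  norm_num [qv17] at h ⊢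
  linarith

lemma qv19 : q 19 = ((160556708509 : ℝ)/268221844800) := by
  have h := q_succ 17
  norm_num [qv18, pv18] at h ⊢
  linarith

lemma pv20 : p 20 = ((216522337903 : ℝ)/367783416000) := by
  have h := p_eq 18
  norm_num [qv18] at h ⊢
  linarith

lemma qv20 : q 20 = ((2559116768251 : ℝ)/4275089280000) := by
  have h := q_succ 18
  norm_num [qv19, pv19] at h ⊢
  linarith

lemma pv21 : p 21 = ((174673647709 : ℝ)/296455723200) := by
  have h := p_eq 19
  norm_num [qv19] at h ⊢
  linarith

lemma qv21 : q 21 = ((13204566538183 : ℝ)/22058178158016) := by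
  have h := q_succ 19
  norm_num [qv20, pv20] at h ⊢
  linarith

lemma pv22 : p 22 = ((2772871232251 : ℝ)/4702598208000) := by
  have h := p_eq 20
  norm_num [qv20] at h ⊢
  linarith

lemma qv22 : q 22 = ((983411344642717 : ℝ)/1642751914003200) := by
  have h := q_succ 20
  norm_num [qv21, pv21] at h ⊢
  linarith

lemma pv23 : p 23 = ((14254955974279 : ℝ)/24158957030208) := by
  have h := p_eq 21
  norm_num [qv21] at h ⊢
  linarith

lemma qv23 : q 23 = ((75240474961020163 : ℝ)/125684097883344000) := by
  have h := q_succ 21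
  norm_num [qv22, pv22] at h ⊢
  linarith

lemma pv24 : p 24 = ((1058081886188317 : ℝ)/1792092997094400) := by
  have h := p_eq 22
  norm_num [qv22] at h ⊢
  linarith

lemma qv24 : q 24 = ((1720461405758529923 : ℝ)/2873865497158656000) := by
  have h := q_succ 22
  norm_num [qv23, pv23] at h ⊢
  linarith

lemma pv25 : p 25 = ((80705000955948163 : ℝ)/136613149873200000) := by
  have h := p_eq 23
  norm_num [qv23] at h ⊢
  linarith

lemma qv25 : q 25 = ((1579641437236667011 : ℝ)/2638598463270000000) := by
  have h := q_succ 23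
  norm_num [qv24, pv24] at h ⊢
  linarith

lemma pv26 : p 26 = ((1840205801473473923 : ℝ)/3113354288588544000) := by
  have h := p_eq 24
  norm_num [qv24] at h ⊢
  linarith

lemma qv26 : q 26 = ((102172161136047971119 : ℝ)/170663704252795353600) := by
  have h := q_succ 24
  norm_num [qv25, pv25] at h ⊢
  linarith

lemma pv27 : p 27 = ((1685185375767467011 : ℝ)/2849686340331600000) := by
  have h := p_eq 25
  norm_num [qv25] at h ⊢
  linarith

lemma qv27 : q 27 = ((6611049401993607585659 : ℝ)/11042648556238563264000) := by
  have h := q_succ 25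
  norm_num [qv26, pv26] at h ⊢
  linarith

lemma pv28 : p 28 = ((108736149761155484719 : ℝ)/183791681503010380800) := by
  have h := p_eq 26
  norm_num [qv26] at h ⊢
  linarith

lemma qv28 : q 28 = ((177747816957796043312411 : ℝ)/296894254735632153600000) := by
  have h := q_succ 26
  norm_num [qv27, pv27] at h ⊢
  linarith

lemma pv29 : p 29 = ((7020036385557998817659 : ℝ)/11860622523367345728000) := by
  have h := p_eq 27
  norm_num [qv27] at h ⊢
  linarith

lemma qv29 : q 29 = ((20829822155982457355797 : ℝ)/34791897691483732800000) := by
  have h := q_succ 27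
  norm_num [qv28, pv28] at h ⊢
  linarith

lemma pv30 : p 30 = ((188351183198354334512411 : ℝ)/318100987216748736000000) := by
  have h := p_eq 28
  norm_num [qv28] at h ⊢
  linarith

lemma qv30 : q 30 = ((6511105727949341987823101 : ℝ)/10875335699325857760000000) := by
  have h := q_succ 28
  norm_num [qv29, pv29] at h ⊢
  linarith

lemma pv31 : p 31 = ((22029542766033620555797 : ℝ)/37191338911586059200000) := by
  have h := p_eq 29
  norm_num [qv29] at h ⊢
  linarith

lemma qv31 : q 31 = ((214136487636407803528842763 : ℝ)/357663206996895776296320000) := by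
  have h := q_succ 29
  norm_num [qv30, pv30] at h ⊢
  linarith

lemma pv32 : p 32 = ((6873616917926870579823101 : ℝ)/11600358079280914944000000) := by
  have h := p_eq 30
  norm_num [qv30] at h ⊢
  linarith

lemma qv32 : q 32 = ((33085622325163901574426321943 : ℝ)/55261012460873137215897600000) := by
  have h := q_succ 30
  norm_num [qv31, pv31] at h ⊢
  linarith

lemma pv33 : p 33 = ((225674010442759280183562763 : ℝ)/380738252609598729605760000) := by
  have h := p_eq 31
  norm_num [qv31] at h ⊢
  linarith

lemma qv33 : q 33 = ((40599338116933826843986215247 : ℝ)/67810144121721957363408000000) := by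
  have h := q_succ 31
  norm_num [qv32, pv32] at h ⊢
  linarith

lemma pv34 : p 34 = ((34812528964566187112423121943 : ℝ)/58714825739677708291891200000) := by
  have h := p_eq 32
  norm_num [qv32] at h ⊢
  linarith

lemma qv34 : q 34 = ((17368309318654149548648958763591 : ℝ)/29008793592009517752962496000000) := by
  have h := q_succ 32
  norm_num [qv33, pv33] at h ⊢
  linarith

lemma pv35 : p 35 = ((42654190969107219491362215247 : ℝ)/71919849826068742658160000000) := by
  have h := p_eq 33
  norm_num [qv33] at h ⊢
  linarith

lemma qv35 : q 35 = ((294482280860650701173244347920951 : ℝ)/491844597234763449790713600000000) := by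
  have h := q_succ 33
  norm_num [qv34, pv34] at h ⊢
  linarith

lemma pv36 : p 36 = ((18221509130183841247265502763591 : ℝ)/30715193215068901150195584000000) := by
  have h := p_eq 34
  norm_num [qv34] at h ⊢
  linarith

lemma qv36 : q 36 = ((293749525895139825059084315920477 : ℝ)/490617136665571153834384588800000) := by
  have h := q_succ 34
  norm_num [qv35, pv35] at h ⊢
  linarith

lemma pv37 : p 37 = ((308534983638786799738693307920951 : ℝ)/519950002791035646921611520000000) := by
  have h := p_eq 35
  norm_num [qv35] at h ⊢
  linarith

lemma qv37 : q 37 = ((184627169478589102697146121047859863 : ℝ)/308360063083815054947196866304000000) := by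
  have h := q_succ 35
  norm_num [qv36, pv36] at h ⊢
  linarith

lemma pv38 : p 38 = ((307377779691405690443372776720477 : ℝ)/517873644258102884602961510400000) := by
  have h := p_eq 36
  norm_num [qv36] at h ⊢
  linarith

lemma qv38 : q 38 = ((524308519203990133461703461132492479 : ℝ)/875682282871046405407165793280000000) := by
  have h := q_succ 36
  norm_num [qv37, pv37] at h ⊢
  linarith

lemma pv39 : p 39 = ((192961225237611131209232522839859863 : ℝ)/325028174601859111971369669888000000) := by
  have h := p_eq 37
  norm_num [qv37] at h ⊢
  linarith

lemma qv39 : q 39 = ((6801644207813728055622934293594061769 : ℝ)/11359804054008077355813019614720000000) := by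
  have h := q_succ 37
  norm_num [qv38, pv38] at h ⊢
  linarith

lemma pv40 : p 40 = ((547352789805859775709260455692492479 : ℝ)/921770824074785689902279782400000000) := by
  have h := p_eq 38
  norm_num [qv38] at h ⊢
  linarith

lemma qv40 : q 40 = ((5029937477020624726389170220303808850987 : ℝ)/8400728205094204740183093006336000000000) := by
  have h := q_succ 38
  norm_num [qv39, pv39] at h ⊢
  linarith

lemma pv41 : p 41 = ((7092921234839576192951473258074061769 : ℝ)/11942358108059773630470097543680000000) := by
  have h := p_eq 39
  norm_num [qv39] at h ⊢
  linarith

lemma qv41 : q 41 = ((1825591839363027225832267008011058328217 : ℝ)/3048987024346634149962588721924608000000) := by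
  have h := q_succ 39
  norm_num [qv40, pv40] at h ⊢
  linarith

lemma pv42 : p 42 = ((5239955682147979844893747545462208850987 : ℝ)/8820764615348914977192247656652800000000) := by
  have h := p_eq 40
  norm_num [qv40] at h ⊢
  linarith

lemma qv42 : q 42 = ((178663712197877482234739812336889998266197 : ℝ)/298391126477053186869757751706900480000000) := by
  have h := q_succ 40
  norm_num [qv41, pv41] at h ⊢
  linarith

lemma pv43 : p 43 = ((1899957376542213424611842342692146328217 : ℝ)/3197718098705006547521739391286784000000) := by
  have h := p_eq 41
  norm_num [qv41] at h ⊢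
  linarith

lemma qv43 : q 43 = ((1758080132989693468662296459288328227776163 : ℝ)/2936202377641177490399876881586227200000000) := by
  have h := q_succ 41
  norm_num [qv42, pv42] at h ⊢
  linarith

lemma pv44 : p 44 = ((185768262828283510493543568329911438266197 : ℝ)/312600227737865243387365263692943360000000) := by
  have h := p_eq 42
  norm_num [qv42] at h ⊢
  linarith

lemma qv44 : q 44 = ((127523779711331144079375635916243318612528623 : ℝ)/212978795555000076824771092301274316800000000) := by
  have h := q_succ 42
  norm_num [qv43, pv43] at h ⊢
  linarith

lemma pv45 : p 45 = ((1826363909213906898671595921650798627776163 : ℝ)/3072769930089604350418475806311168000000000) := by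
  have h := p_eq 43
  norm_num [qv43] at h ⊢
  linarith

lemma qv45 : q 45 = ((81232567193586822598728513390708502939930406827 : ℝ)/135666722700575914123051823503739162880000000000) := by
  have h := q_succ 43
  norm_num [qv44, pv44] at h ⊢
  linarith
lemma main : ∀ n : ℕ, 40 ≤ n →
    (100*(n:ℝ)*q n ≤ 60*(n:ℝ) - 1) ∧
    (((n:ℝ)+2)^2*(q (n+2) - q n) ≤ 1/50) ∧
    (q n < q (n+1)) := by
  intro n
  induction n using Nat.strong_induction_on with
  | _ n IH =>
    intro hn
    rcases Nat.lt_or_ge n 44 with h44 | h44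
    · interval_cases n <;>
        exact ⟨by norm_num [qv40, qv41, qv42, qv43, qv44, qv45], by norm_num [qv40, qv41, qv42, qv43, qv44, qv45], by norm_num [qv40, qv41, qv42, qv43, qv44, qv45]⟩
    · obtain ⟨m, rfl⟩ : ∃ m, n = m + 44 := ⟨n - 44, by omega⟩
      have I0A : 100*((m:ℝ)+40)*q (m+40) ≤ 60*((m:ℝ)+40) - 1 := by
        have h := (IH (m+40) (by omega) (by omega)).1; push_cast at h; linarith
      have I2A : 100*((m:ℝ)+42)*q (m+42) ≤ 60*((m:ℝ)+42) - 1 := by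
        have h := (IH (m+42) (by omega) (by omega)).1; push_cast at h; linarith
      have I0B : ((m:ℝ)+42)^2*(q (m+42) - q (m+40)) ≤ 1/50 := by
        have h := (IH (m+40) (by omega) (by omega)).2.1
        rw [show m+40+2 = m+42 from by omega] at h
        push_cast at h; linarith
      have I1B : ((m:ℝ)+43)^2*(q (m+43) - q (m+41)) ≤ 1/50 := by
        have h := (IH (m+41) (by omega) (by omega)).2.1
        rw [show m+41+2 = m+43 from by omega] at h
        push_cast at h; linarith
      have I2B : ((m:ℝ)+44)^2*(q (m+44) - q (m+42)) ≤ 1/50 := by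
        have h := (IH (m+42) (by omega) (by omega)).2.1
        rw [show m+42+2 = m+44 from by omega] at h
        push_cast at h; linarith
      have I1C : q (m+41) < q (m+42) := by
        have h := (IH (m+41) (by omega) (by omega)).2.2
        rwa [show m+41+1 = m+42 from by omega] at h
      -- A at m+44
      have hA' := step_a (m+42) (by omega)
        (by push_cast; linarith [I2A])
        (by rw [show m+42+2 = m+44 from by omega]; push_cast; linarith [I2B])
      rw [show m+42+2 = m+44 from by omega] at hA'
      push_cast at hA'
      have hA : 100*((m+44:ℕ):ℝ)*q (m+44) ≤ 60*((m+44:ℕ):ℝ) - 1 := by push_cast; linarith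
      refine ⟨hA, ?_, ?_⟩
      -- B at m+44
      · have hB' := step_b (m+40) (by omega)
          (by rw [show m+40+2 = m+42 from by omega]; push_cast; linarith [I0B])
          (by rw [show m+40+3 = m+43 from by omega, show m+40+1 = m+41 from by omega]
              push_cast; linarith [I1B])
          (by rw [show m+40+4 = m+44 from by omega, show m+40+2 = m+42 from by omega]
              push_cast; linarith [I2B])
          (by rw [show m+40+1 = m+41 from by omega]
              exact (IH (m+40) (by omega) (by omega)).2.2)
          (by rw [show m+40+1 = m+41 from by omega, show m+40+2 = m+42 from by omega]
              exact I1C)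
          (by rw [show m+40+2 = m+42 from by omega, show m+40+3 = m+43 from by omega]
              have h := (IH (m+42) (by omega) (by omega)).2.2
              rwa [show m+42+1 = m+43 from by omega] at h)
          (by rw [show m+40+3 = m+43 from by omega, show m+40+4 = m+44 from by omega]
              have h := (IH (m+43) (by omega) (by omega)).2.2
              rwa [show m+43+1 = m+44 from by omega] at h)
        rw [show m+40+6 = m+46 from by omega, show m+40+4 = m+44 from by omega] at hB'
        rw [show m+44+2 = m+46 from by omega]
        push_cast at hB' ⊢
        linarith
      -- C at m+44
      · have hC' := step_c (m+42)
          (by rw [show m+42+2 = m+44 from by omega]; push_cast at hA ⊢; linarith [hA])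
          (by rw [show m+42+2 = m+44 from by omega]; push_cast; linarith [I2B])
        rw [show m+42+2 = m+44 from by omega, show m+42+3 = m+45 from by omega] at hC'
        rwa [show m+44+1 = m+45 from by omega]
lemma q_mono : ∀ k : ℕ, 9 ≤ k → q k < q (k+1) := by
  intro k hk
  rcases Nat.lt_or_ge k 40 with h | h
  · interval_cases k <;> norm_num [qv9, qv10, qv11, qv12, qv13, qv14, qv15, qv16, qv17, qv18, qv19, qv20, qv21, qv22, qv23, qv24, qv25, qv26, qv27, qv28, qv29, qv30, qv31, qv32, qv33, qv34, qv35, qv36, qv37, qv38, qv39, qv40]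
  · exact (main k h).2.2

lemma q_lb : ∀ k : ℕ, 9 ≤ k → (1:ℝ)/2 < q k := by
  intro k hk
  induction k, hk using Nat.le_induction with
  | base => norm_num [qv9]
  | succ n hn ih => exact lt_trans ih (q_mono n hn)


/-- Proposition 3.4: for every `n ≥ 9`, both `p` and `q` increase at `n`. -/
theorem p_q_increasing (n : ℕ) (hn : 9 ≤ n) :
    p n < p (n + 1) ∧ q n < q (n + 1) := by
  refine ⟨?_, q_mono n hn⟩
  rcases Nat.lt_or_ge n 11 with h | h
  · interval_cases n
    · norm_num [pv9, pv10]
    · norm_num [pv10, pv11]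
  · obtain ⟨m, rfl⟩ : ∃ m, n = m + 2 := ⟨n - 2, by omega⟩
    have h9 : 9 ≤ m := by omega
    have := p_step m (le_of_lt (q_mono m h9)) (q_lb m h9)
    rw [show m+2+1 = m+3 from by omega]
    exact this
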